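/- Assuming the effect function has the reset property (effect(a,v) = v_true for all a, v), every recursion-free reduced head normal form p = Σᵢ φᵢ :→ aᵢ.pᵢ + ψ ∧→ (χ :→ 1) satisfies depth(p) > depth(pᵢ) for every i. -/
import Mathlib


abbrev Val (PVar : Type) := PVar → Bool
abbrev Prp (PVar : Type) := Val PVar → Bool

/-- Recursion-free process expressions with guarded commands `φ :→ p` and
root-signal emission `ψ ∧→ p` (besides 0, 1, prefix, choice, sequencing, NA). -/
inductive SExpr (A PVar : Type) where
  | zero | one
  | act (a : A) (p : SExpr A PVar)
  | add (p q : SExpr A PVar)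
  | seq (p q : SExpr A PVar)
  | na (p : SExpr A PVar)
  | guard (φ : Prp PVar) (p : SExpr A PVar)
  | signal (φ : Prp PVar) (p : SExpr A PVar)

/-- The pair (acceptance `⟨p,v⟩↓`, consistency `Cons⟨p,v⟩`). -/
def AC {A PVar : Type} : SExpr A PVar → Val PVar → Prop × Prop
  | .zero, _ => (False, True)
  | .one, _ => (True, True)
  | .act _ _, _ => (False, True)
  | .add p q, v => (((AC p v).1 ∧ (AC q v).2) ∨ ((AC q v).1 ∧ (AC p v).2),
      (AC p v).2 ∧ (AC q v).2)
  | .seq p q, v => ((AC p v).1 ∧ (AC q v).1,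
      ((AC p v).2 ∧ ¬ (AC p v).1) ∨ ((AC p v).1 ∧ (AC q v).2))
  | .na p, v => (False, (AC p v).2)
  | .guard φ p, v => (φ v = true ∧ (AC p v).1, (AC p v).2)
  | .signal φ p, v => (φ v = true ∧ (AC p v).1, φ v = true ∧ (AC p v).2)

/-- Valuation-indexed acceptance. -/
def SAcc {A PVar : Type} (p : SExpr A PVar) (v : Val PVar) : Prop := (AC p v).1

/-- Consistency: fails if `v` falsifies the root signal of `p`. -/
def SCons {A PVar : Type} (p : SExpr A PVar) (v : Val PVar) : Prop := (AC p v).2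

/-- The valuation-indexed transition relation `⟨p,v⟩ →a ⟨q,v'⟩`, with
`v' = effect(a,v)`, consistency of targets and of alternatives, and the
non-transparent rule for sequencing. -/
def SStep {A PVar : Type} (effect : A → Val PVar → Val PVar) :
    SExpr A PVar → Val PVar → A → SExpr A PVar → Val PVar → Prop
  | .zero, _, _, _, _ => False
  | .one, _, _, _, _ => False
  | .act b p, v, a, q, v' =>
      a = b ∧ q = p ∧ v' = effect a v ∧ SCons p v'
  | .add p q, v, a, r, v' =>
      (SStep effect p v a r v' ∧ SCons q v) ∨ (SStep effect q v a r v' ∧ SCons p v)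
  | .seq p q, v, a, r, v' =>
      (∃ p', SStep effect p v a p' v' ∧ r = SExpr.seq p' q ∧ SCons (SExpr.seq p' q) v') ∨
      (SAcc p v ∧ (∀ b r' w, ¬ SStep effect p v b r' w) ∧ SStep effect q v a r v')
  | .na p, v, a, r, v' => SStep effect p v a r v'
  | .guard φ p, v, a, r, v' => φ v = true ∧ SStep effect p v a r v'
  | .signal φ p, v, a, r, v' => φ v = true ∧ SStep effect p v a r v'

/-- The depth of `p`: the supremum of lengths `n` of chains
`⟨p,v₁⟩ →a₁ ⟨p₁,v₁'⟩ → ⋯ →aₙ ⟨pₙ,vₙ'⟩`. -/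
noncomputable def sdepth {A PVar : Type} (effect : A → Val PVar → Val PVar)
    (p : SExpr A PVar) : ℕ∞ :=
  sSup {m : ℕ∞ | ∃ n : ℕ, m = (n : ℕ∞) ∧
    ∃ f : ℕ → SExpr A PVar, f 0 = p ∧
      ∀ i < n, ∃ v a v', SStep effect (f i) v a (f (i + 1)) v'}

/-- The head normal form `Σᵢ φᵢ :→ aᵢ.pᵢ + ψ ∧→ (χ :→ 1)`. -/
def hnfS {A PVar : Type} (l : List (Prp PVar × A × SExpr A PVar))
    (ψ χ : Prp PVar) : SExpr A PVar :=
  SExpr.add (l.foldr (fun t acc => SExpr.add (SExpr.guard t.1 (.act t.2.1 t.2.2)) acc) .zero)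
    (SExpr.signal ψ (.guard χ .one))

/-- Structural size of a process expression. -/
def ssize {A PVar : Type} : SExpr A PVar → ℕ
  | .zero => 1
  | .one => 1
  | .act _ p => ssize p + 1
  | .add p q => ssize p + ssize q + 1
  | .seq p q => ssize p + ssize q + 1
  | .na p => ssize p + 1
  | .guard _ p => ssize p + 1
  | .signal _ p => ssize p + 1

lemma step_ssize {A PVar : Type} (effect : A → Val PVar → Val PVar) :
    ∀ p v a q v', SStep effect p v a q v' → ssize q < ssize p := by
  intro p
  induction p with
  | zero => intro v a q v' h; exact h.elim
  | one => intro v a q v' h; exact h.elim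
  | act b p ih =>
      intro v a q v' h
      obtain ⟨_, rfl, _⟩ := h
      simp [ssize]
  | add p q ihp ihq =>
      intro v a r v' h
      rcases h with ⟨h, _⟩ | ⟨h, _⟩
      · have := ihp v a r v' h; simp [ssize]; omega
      · have := ihq v a r v' h; simp [ssize]; omega
  | seq p q ihp ihq =>
      intro v a r v' h
      rcases h with ⟨p', h, rfl, _⟩ | ⟨_, _, h⟩
      · have := ihp v a p' v' h; simp [ssize]; omega
      · have := ihq v a r v' h; simp [ssize]; omega
  | na p ih => intro v a q v' h; have := ih v a q v' h; simp [ssize]; omega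
  | guard φ p ih => intro v a q v' h; have := ih v a q v' h.2; simp [ssize]; omega
  | signal φ p ih => intro v a q v' h; have := ih v a q v' h.2; simp [ssize]; omega

lemma chain_le {A PVar : Type} (effect : A → Val PVar → Val PVar) :
    ∀ n (f : ℕ → SExpr A PVar),
      (∀ i < n, ∃ v a v', SStep effect (f i) v a (f (i + 1)) v') → n ≤ ssize (f 0) := by
  intro n
  induction n with
  | zero => intro f _; omega
  | succ n ih =>
      intro f hf
      have h0 : ∃ v a v', SStep effect (f 0) v a (f 1) v' := hf 0 (by omega)
      obtain ⟨v, a, v', h0⟩ := h0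
      have hlt := step_ssize effect (f 0) v a (f 1) v' h0
      have := ih (fun i => f (i + 1)) (fun i hi => hf (i + 1) (by omega))
      simp at this
      omega

lemma sdepth_mem {A PVar : Type} (effect : A → Val PVar → Val PVar) (p : SExpr A PVar) :
    ∃ n : ℕ, sdepth effect p = (n : ℕ∞) ∧
      ∃ f : ℕ → SExpr A PVar, f 0 = p ∧
        ∀ i < n, ∃ v a v', SStep effect (f i) v a (f (i + 1)) v' := by
  set S := {m : ℕ∞ | ∃ n : ℕ, m = (n : ℕ∞) ∧
    ∃ f : ℕ → SExpr A PVar, f 0 = p ∧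
      ∀ i < n, ∃ v a v', SStep effect (f i) v a (f (i + 1)) v'} with hS
  have hne : S.Nonempty := ⟨0, 0, rfl, fun _ => p, rfl, fun i hi => by omega⟩
  have hsub : S ⊆ (fun n : ℕ => (n : ℕ∞)) '' Set.Iic (ssize p) := by
    rintro m ⟨n, rfl, f, hf0, hf⟩
    exact ⟨n, by have := chain_le effect n f hf; simp [hf0] at this ⊢; omega, rfl⟩
  have hfin : S.Finite := Set.Finite.subset ((Set.finite_Iic _).image _) hsub
  have hmem : sSup S ∈ S := hne.csSup_mem hfin
  obtain ⟨n, hn, f, hf0, hf⟩ := hmem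
  exact ⟨n, hn, f, hf0, hf⟩

lemma cons_foldr {A PVar : Type} (l : List (Prp PVar × A × SExpr A PVar)) (v : Val PVar) :
    SCons (l.foldr (fun t acc =>
      SExpr.add (SExpr.guard t.1 (.act t.2.1 t.2.2)) acc) .zero) v := by
  induction l with
  | nil => simp [SCons, AC]
  | cons h t ih => simpa [SCons, AC] using ih

lemma step_foldr {A PVar : Type} (effect : A → Val PVar → Val PVar)
    (l : List (Prp PVar × A × SExpr A PVar)) (t : Prp PVar × A × SExpr A PVar)
    (ht : t ∈ l) (v : Val PVar) (hφ : t.1 v = true)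
    (hc : SCons t.2.2 (effect t.2.1 v)) :
    SStep effect (l.foldr (fun t acc =>
      SExpr.add (SExpr.guard t.1 (.act t.2.1 t.2.2)) acc) .zero)
      v t.2.1 t.2.2 (effect t.2.1 v) := by
  induction l with
  | nil => cases ht
  | cons h tl ih =>
      rcases List.mem_cons.mp ht with rfl | hmem
      · exact Or.inl ⟨⟨hφ, rfl, rfl, rfl, hc⟩, cons_foldr tl v⟩
      · exact Or.inr ⟨ih hmem, trivial⟩

/-- if the effect function has the reset property, then every
recursion-free reduced head normal form `p = Σᵢ φᵢ :→ aᵢ.pᵢ + ψ ∧→ (χ :→ 1)`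
satisfies `depth(p) > depth(pᵢ)` for every summand `i`. -/
theorem depth_decreases_in_reduced_hnf (A PVar : Type)
    (effect : A → Val PVar → Val PVar)
    (hreset : ∀ a v, effect a v = fun _ => true)
    (l : List (Prp PVar × A × SExpr A PVar)) (ψ χ : Prp PVar)
    (hreduced : ∀ t ∈ l, ∃ v : Val PVar,
      (t.1 v = true ∧ ψ v = true) ∧ SCons t.2.2 (effect t.2.1 v)) :
    ∀ t ∈ l, sdepth effect t.2.2 < sdepth effect (hnfS l ψ χ) := by
  intro t ht
  obtain ⟨n, hn, f, hf0, hf⟩ := sdepth_mem effect t.2.2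
  obtain ⟨v, ⟨hφ, hψ⟩, hc⟩ := hreduced t ht
  -- the extended chain starting at the hnf
  set g : ℕ → SExpr A PVar := fun i => if i = 0 then hnfS l ψ χ else f (i - 1) with hg
  have hstep0 : SStep effect (hnfS l ψ χ) v t.2.1 t.2.2 (effect t.2.1 v) :=
    Or.inl ⟨step_foldr effect l t ht v hφ hc, hψ, trivial⟩
  have hchain : ∀ i < n + 1, ∃ w a w', SStep effect (g i) w a (g (i + 1)) w' := by
    intro i hi
    cases i with
    | zero => exact ⟨v, t.2.1, effect t.2.1 v, by simpa [hg, hf0] using hstep0⟩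
    | succ j =>
        obtain ⟨w, a, w', h⟩ := hf j (by omega)
        exact ⟨w, a, w', by simpa [hg] using h⟩
  have hmem : ((n + 1 : ℕ) : ℕ∞) ∈ {m : ℕ∞ | ∃ k : ℕ, m = (k : ℕ∞) ∧
      ∃ f : ℕ → SExpr A PVar, f 0 = hnfS l ψ χ ∧
        ∀ i < k, ∃ v a v', SStep effect (f i) v a (f (i + 1)) v'} :=
    ⟨n + 1, rfl, g, by simp [hg], hchain⟩
  have hle : ((n + 1 : ℕ) : ℕ∞) ≤ sdepth effect (hnfS l ψ χ) := le_sSup hmem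
  rw [hn]
  exact lt_of_lt_of_le (by exact_mod_cast Nat.lt_succ_self n) hle
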